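/- Let B be a monotone bead distribution of n beads on [μ,∞) whose gaps bₖ satisfy b_{n+1} = bₙ = b_{n−1} for some three consecutive equal gaps at the end with b_{n−2} < b_{n−1} (n ≥ 3 indices in range). Then there exists a monotone distribution C with Cₖ ≤ Bₖ for all k, C ≠ B, such that B cannot be obtained from C by any finite sequence of admissible bead slides. -/
import Mathlib


/-- `A` is a monotone bead distribution of `n` beads on `[μ,∞)`.
We use the convention `A 0 = μ`, so the beads are `A 1 < ⋯ < A n` with
`μ ≤ A 1` and nondecreasing successive gaps. -/
def BeadMono (n : ℕ) (μ : ℝ) (A : ℕ → ℝ) : Prop :=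
  A 0 = μ ∧ A 0 ≤ A 1 ∧
  (∀ k, 2 ≤ k → k ≤ n → A (k - 1) < A k) ∧
  (∀ k, 2 ≤ k → k ≤ n → A (k - 1) - A (k - 2) ≤ A k - A (k - 1))

/-- One admissible bead slide: move the `k`-th bead to the right by `δ ≥ 0`
so that the result is again monotone. -/
def BeadSlide (n : ℕ) (μ : ℝ) (A B : ℕ → ℝ) : Prop :=
  ∃ k δ, 1 ≤ k ∧ k ≤ n ∧ 0 ≤ δ ∧
    B = Function.update A k (A k + δ) ∧ BeadMono n μ B

/-- `BeadReach n μ A B`: `B` is obtained from `A` by finitely many admissible slides. -/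
def BeadReach (n : ℕ) (μ : ℝ) : (ℕ → ℝ) → (ℕ → ℝ) → Prop :=
  Relation.ReflTransGen (BeadSlide n μ)

lemma slide_le {n : ℕ} {μ : ℝ} {A A' : ℕ → ℝ} (h : BeadSlide n μ A A') :
    ∀ j, A j ≤ A' j := by
  obtain ⟨k, δ, _, _, hδ, hup, _⟩ := h
  subst hup
  intro j
  rcases eq_or_ne j k with rfl | hne
  · simp; linarith
  · simp [Function.update_of_ne hne]

lemma reach_le {n : ℕ} {μ : ℝ} {A D : ℕ → ℝ} (h : BeadReach n μ A D) :
    ∀ j, A j ≤ D j := by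
  induction h with
  | refl => intro j; exact le_refl _
  | tail _ hstep ih => intro j; exact le_trans (ih j) (slide_le hstep j)

/-- if the last three gaps of `B` are equal and the preceding gap
is strictly smaller, there is a monotone `C ≤ B`, `C ≠ B`, that cannot be slid
to `B`. -/
theorem no_slide_of_equal_tail_gaps (n : ℕ) (μ : ℝ) (B : ℕ → ℝ)
    (hn : 3 ≤ n) (hB : BeadMono (n + 1) μ B)
    (h1 : B (n + 1) - B n = B n - B (n - 1))
    (h2 : B n - B (n - 1) = B (n - 1) - B (n - 2))
    (h3 : B (n - 2) - B (n - 3) < B (n - 1) - B (n - 2)) :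
    ∃ C : ℕ → ℝ, BeadMono (n + 1) μ C ∧
      (∀ k, 1 ≤ k → k ≤ n + 1 → C k ≤ B k) ∧
      (∃ k, 1 ≤ k ∧ k ≤ n + 1 ∧ C k ≠ B k) ∧
      ¬ ∃ D : ℕ → ℝ, BeadReach (n + 1) μ C D ∧ ∀ k, k ≤ n + 1 → D k = B k := by
  obtain ⟨m, rfl⟩ : ∃ m, n = m + 3 := ⟨n - 3, by omega⟩
  have e0 : m + 3 + 1 = m + 4 := by omega
  have e31 : m + 3 - 1 = m + 2 := by omega
  have e32 : m + 3 - 2 = m + 1 := by omega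
  have e33 : m + 3 - 3 = m := by omega
  have e21 : m + 2 - 1 = m + 1 := by omega
  have e22 : m + 2 - 2 = m := by omega
  have e41 : m + 4 - 1 = m + 3 := by omega
  have e42 : m + 4 - 2 = m + 2 := by omega
  rw [e0] at h1 hB ⊢
  rw [e31] at h1 h2 h3
  rw [e32] at h2 h3
  rw [e33] at h3
  obtain ⟨hB0, hB1, hBs, hBg⟩ := hB
  set ε : ℝ := (B (m + 2) - B (m + 1) - (B (m + 1) - B m)) / 2 with hε_def
  have hε : 0 < ε := by rw [hε_def]; linarith
  have hb0 : B m ≤ B (m + 1) := by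
    rcases Nat.eq_zero_or_pos m with rfl | hm
    · exact hB1
    · have := hBs (m + 1) (by omega) (by omega)
      have em : m + 1 - 1 = m := by omega
      rw [em] at this; linarith
  have hg0 : B (m + 1) < B (m + 2) := by
    have := hBs (m + 2) (by omega) (by omega)
    rw [e21] at this; exact this
  set C : ℕ → ℝ := fun k => if k = m + 2 then B (m + 2) - ε
    else if k = m + 3 then B (m + 3) - ε else B k with hC_def
  have hCeq : ∀ j, j ≠ m + 2 → j ≠ m + 3 → C j = B j := by
    intro j hj2 hj3; simp [hC_def, hj2, hj3]
  have hC2 : C (m + 2) = B (m + 2) - ε := by simp [hC_def]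
  have hC3 : C (m + 3) = B (m + 3) - ε := by simp [hC_def]
  have hCmono : BeadMono (m + 4) μ C := by
    refine ⟨?_, ?_, ?_, ?_⟩
    · rw [hCeq 0 (by omega) (by omega)]; exact hB0
    · rw [hCeq 0 (by omega) (by omega), hCeq 1 (by omega) (by omega)]; exact hB1
    · intro k hk2 hk4
      rcases (by omega : k ≤ m + 1 ∨ k = m + 2 ∨ k = m + 3 ∨ k = m + 4) with h | rfl | rfl | rfl
      · rw [hCeq (k - 1) (by omega) (by omega), hCeq k (by omega) (by omega)]
        exact hBs k hk2 (by omega)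
      · rw [e21, hCeq (m + 1) (by omega) (by omega), hC2]
        rw [hε_def]; linarith
      · rw [e31, hC2, hC3]
        have := hBs (m + 3) (by omega) (by omega)
        rw [e31] at this; linarith
      · rw [e41, hC3, hCeq (m + 4) (by omega) (by omega)]
        have := hBs (m + 4) (by omega) (by omega)
        rw [e41] at this; linarith
    · intro k hk2 hk4
      rcases (by omega : k ≤ m + 1 ∨ k = m + 2 ∨ k = m + 3 ∨ k = m + 4) with h | rfl | rfl | rfl
      · rw [hCeq (k - 1) (by omega) (by omega), hCeq k (by omega) (by omega),
          hCeq (k - 2) (by omega) (by omega)]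
        exact hBg k hk2 (by omega)
      · rw [e21, e22, hCeq (m + 1) (by omega) (by omega),
          hCeq m (by omega) (by omega), hC2]
        rw [hε_def]; linarith
      · rw [e31, e32, hCeq (m + 1) (by omega) (by omega), hC2, hC3]
        linarith
      · rw [e41, e42, hC2, hC3, hCeq (m + 4) (by omega) (by omega)]
        linarith
  refine ⟨C, hCmono, ?_, ⟨m + 2, by omega, by omega, ?_⟩, ?_⟩
  · intro k _ _
    rcases (by omega : (k ≠ m + 2 ∧ k ≠ m + 3) ∨ k = m + 2 ∨ k = m + 3) with ⟨h2', h3'⟩ | rfl | rfl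
    · rw [hCeq k h2' h3']
    · rw [hC2]; linarith
    · rw [hC3]; linarith
  · rw [hC2]; intro h; linarith
  · rintro ⟨D, hreach, hDB⟩
    have key : ∀ A : ℕ → ℝ, BeadReach (m + 4) μ A D →
        A (m + 2) < B (m + 2) → A (m + 3) < B (m + 3) → False := by
      intro A hA
      induction hA using Relation.ReflTransGen.head_induction_on with
      | refl =>
        intro hx _
        rw [hDB (m + 2) (by omega)] at hx
        exact lt_irrefl _ hx
      | @head S T hstep hr ih =>
        intro hx hy
        obtain ⟨k, δ, hk1, hk4, hδ, hup, hmono⟩ := hstep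
        subst hup
        obtain ⟨_, _, _, hg'⟩ := hmono
        have tne : ∀ j, j ≠ k → Function.update S k (S k + δ) j = S j :=
          fun j h => Function.update_of_ne h _ _
        have hTle : ∀ j, j ≤ m + 4 → Function.update S k (S k + δ) j ≤ B j := by
          intro j hj
          have := reach_le hr j
          rw [hDB j hj] at this; exact this
        rcases (by omega : (k ≠ m + 2 ∧ k ≠ m + 3) ∨ k = m + 2 ∨ k = m + 3)
          with ⟨h2', h3'⟩ | rfl | rfl
        · apply ih
          · rw [tne (m + 2) (Ne.symm h2')]; exact hx
          · rw [tne (m + 3) (Ne.symm h3')]; exact hy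
        · have hgap := hg' (m + 3) (by omega) (by omega)
          rw [e31, e32, tne (m + 3) (by omega), tne (m + 1) (by omega),
            Function.update_self] at hgap
          have ha1 : S (m + 1) ≤ B (m + 1) := by
            have := hTle (m + 1) (by omega)
            rwa [tne (m + 1) (by omega)] at this
          apply ih
          · rw [Function.update_self]; linarith
          · rw [tne (m + 3) (by omega)]; exact hy
        · have hgap := hg' (m + 4) (by omega) (by omega)
          rw [e41, e42, tne (m + 4) (by omega), tne (m + 2) (by omega),
            Function.update_self] at hgap
          have ha4 : Function.update S (m + 3) (S (m + 3) + δ) (m + 4) ≤ B (m + 4) :=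
            hTle (m + 4) (by omega)
          rw [tne (m + 4) (by omega)] at ha4
          apply ih
          · rw [tne (m + 2) (by omega)]; exact hx
          · rw [Function.update_self]; linarith
    exact key C hreach (by rw [hC2]; linarith) (by rw [hC3]; linarith)
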